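/- arXiv:2208.04812 — 2 statements merged into one kernel-verified Lean document; each statement's English description precedes it below -/
import Mathlib

section
/- Let T be a densely defined symmetric operator on a Hilbert space H whose range is closed and such that ker T = ker T*. Then T is self-adjoint. -/
open LinearPMap

set_option linter.unusedSectionVars false

noncomputable section

section BanachDefs

variable {H : Type*} [NormedAddCommGroup H] [NormedSpace ℂ H]

/-- Composition `g ∘ f` of unbounded operators, with the natural (maximal) domain
`{x ∈ dom f : f x ∈ dom g}`. -/
def LinearPMap.pComp (g f : H →ₗ.[ℂ] H) : H →ₗ.[ℂ] H where
  domain := (g.domain.comap f.toFun).map f.domain.subtype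
  toFun := g.toFun ∘ₗ (f.toFun.restrict (p := g.domain.comap f.toFun) (q := g.domain)
      (fun _ hx => hx)) ∘ₗ
    ((Submodule.equivMapOfInjective f.domain.subtype (Submodule.injective_subtype _)
      (g.domain.comap f.toFun)).symm).toLinearMap

/-- `n`-th power of an unbounded operator; `T^0` is the identity on all of `H`. -/
def LinearPMap.pPow (T : H →ₗ.[ℂ] H) : ℕ → (H →ₗ.[ℂ] H)
  | 0 => (LinearMap.id : H →ₗ[ℂ] H).toPMap ⊤
  | n + 1 => T.pComp (T.pPow n)

theorem LinearPMap.pPow_domain_succ_le (T : H →ₗ.[ℂ] H) (n : ℕ) :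
    (T.pPow (n + 1)).domain ≤ (T.pPow n).domain := by
  intro x hx
  simp_rw [pPow, pComp] at hx
  obtain ⟨y, -, rfl⟩ := hx
  exact y.2

theorem LinearPMap.pPow_domain_le (T : H →ₗ.[ℂ] H) {i n : ℕ} (h : i ≤ n) :
    (T.pPow n).domain ≤ (T.pPow i).domain := by
  induction n with
  | zero => exact Nat.le_zero.mp h ▸ le_rfl
  | succ n ih =>
    rcases Nat.lt_succ_iff_lt_or_eq.mp (Nat.lt_succ_of_le h) with h' | rfl
    · exact le_trans (T.pPow_domain_succ_le n) (ih (Nat.lt_succ_iff.mp h'))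
    · exact le_rfl

/-- `p(T)` for a complex polynomial `p`, defined on `D(T^n)` where `n = deg p`. -/
def LinearPMap.polyApp (p : Polynomial ℂ) (T : H →ₗ.[ℂ] H) : H →ₗ.[ℂ] H where
  domain := (T.pPow p.natDegree).domain
  toFun := ∑ i ∈ (Finset.range (p.natDegree + 1)).attach,
    p.coeff i.1 • ((T.pPow i.1).toFun ∘ₗ Submodule.inclusion
      (T.pPow_domain_le (Nat.lt_succ_iff.mp (Finset.mem_range.mp i.2))))

/-- `A - μ • I` with domain `dom A`. -/
def LinearPMap.subConst (A : H →ₗ.[ℂ] H) (μ : ℂ) : H →ₗ.[ℂ] H :=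
  ⟨A.domain, A.toFun - μ • A.domain.subtype⟩

/-- An unbounded operator is boundedly invertible if it is bijective from its domain onto `H`
with an everywhere-defined bounded (continuous) inverse. -/
def LinearPMap.IsBddInvertible (A : H →ₗ.[ℂ] H) : Prop :=
  ∃ B : H →L[ℂ] H, (∀ y : H, ∃ hy : B y ∈ A.domain, A ⟨B y, hy⟩ = y) ∧
    ∀ x : A.domain, B (A x) = (x : H)

/-- The spectrum of an unbounded operator: `μ ∉ σ(A)` iff `A - μI` is bijective with a
bounded everywhere-defined inverse. -/
def LinearPMap.pSpectrum (A : H →ₗ.[ℂ] H) : Set ℂ :=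
  {μ | ¬ (A.subConst μ).IsBddInvertible}

/-- The kernel of an unbounded operator, as a subset of `H`. -/
def LinearPMap.pKer (A : H →ₗ.[ℂ] H) : Set H :=
  {x | ∃ hx : x ∈ A.domain, A ⟨x, hx⟩ = 0}

/-- The range of an unbounded operator. -/
def LinearPMap.pRan (A : H →ₗ.[ℂ] H) : Set H :=
  Set.range fun x : A.domain => A x

/-- A bounded everywhere-defined operator seen as an unbounded operator. -/
def ContinuousLinearMap.toPMapTop (B : H →L[ℂ] H) : H →ₗ.[ℂ] H :=
  (B : H →ₗ[ℂ] H).toPMap ⊤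

end BanachDefs

section HilbertDefs

variable {H : Type*} [NormedAddCommGroup H] [InnerProductSpace ℂ H] [CompleteSpace H]

/-- A densely defined closed operator is quasinormal if `T T* T = T* T T`. -/
def LinearPMap.IsQuasinormal (T : H →ₗ.[ℂ] H) : Prop :=
  T.IsClosed ∧ Dense (T.domain : Set H) ∧
    T.pComp (T.adjoint.pComp T) = T.adjoint.pComp (T.pComp T)

/-- A densely defined closed operator is normal if `T* T = T T*` (an equality of unbounded
operators, domains included). -/
def LinearPMap.IsNormal (T : H →ₗ.[ℂ] H) : Prop :=
  T.IsClosed ∧ Dense (T.domain : Set H) ∧ T.adjoint.pComp T = T.pComp T.adjoint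

/-- A symmetric (not necessarily densely defined) operator. -/
def LinearPMap.IsSymm (T : H →ₗ.[ℂ] H) : Prop :=
  ∀ x y : T.domain, inner ℂ (T x) (y : H) = (inner ℂ (x : H) (T y) : ℂ)

/-- A paranormal operator: `‖Tx‖² ≤ ‖T²x‖ ‖x‖` for every `x ∈ D(T²)`. -/
def LinearPMap.IsParanormal (T : H →ₗ.[ℂ] H) : Prop :=
  ∀ (x : H) (hx : x ∈ T.domain) (hTx : T ⟨x, hx⟩ ∈ T.domain),
    ‖T ⟨x, hx⟩‖ ^ 2 ≤ ‖T ⟨T ⟨x, hx⟩, hTx⟩‖ * ‖x‖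

end HilbertDefs

end

/-!
Let `K = ran T`, closed by assumption. Every `u ⊥ K` lies in `ker T* = ker T`, while `ran T*` is
orthogonal to `ker T`; hence `ran T* ⊆ Kᗮᗮ = K`. Now if `y ∈ D(T*)` and `T* y = T x`, then
`y - x ∈ ker T* = ker T ⊆ D(T)` because `T ⊆ T*`, so `D(T*) ⊆ D(T)` and `T* = T`.
-/

namespace LinearPMap

section Algebraic

variable {H : Type*} [NormedAddCommGroup H] [NormedSpace ℂ H]

theorem coe_range_toFun (T : H →ₗ.[ℂ] H) : (LinearMap.range T.toFun : Set H) = T.pRan :=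
  LinearMap.coe_range _

theorem eq_of_le_of_pKer_subset_of_pRan_subset {T S : H →ₗ.[ℂ] H} (hle : T ≤ S)
    (hker : S.pKer ⊆ T.pKer) (hran : S.pRan ⊆ T.pRan) : T = S := by
  refine eq_of_le_of_domain_eq hle (le_antisymm hle.1 fun y hy => ?_)
  obtain ⟨x, hx : T x = S ⟨y, hy⟩⟩ := hran ⟨⟨y, hy⟩, rfl⟩
  have hxS : (x : H) ∈ S.domain := hle.1 x.2
  have hdiff : (y - x : H) ∈ S.pKer :=
    ⟨sub_mem hy hxS, by
      change S (⟨y, hy⟩ - ⟨x, hxS⟩) = 0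
      rw [map_sub, ← hle.2 (x := x) (y := ⟨x, hxS⟩) rfl, ← hx, sub_self]⟩
  obtain ⟨hdiffT, -⟩ := hker hdiff
  simpa using T.domain.add_mem x.2 hdiffT

end Algebraic

section Hilbert

variable {H : Type*} [NormedAddCommGroup H] [InnerProductSpace ℂ H] [CompleteSpace H]
  {T : H →ₗ.[ℂ] H}

theorem orthogonal_range_subset_pKer_adjoint (hT : Dense (T.domain : Set H)) :
    ((LinearMap.range T.toFun)ᗮ : Set H) ⊆ T.adjoint.pKer := by
  intro u hu
  have hzero : ∀ x : T.domain, inner ℂ (0 : H) (x : H) = inner ℂ u (T x) := fun x => by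
    rw [inner_zero_left]
    exact (Submodule.inner_left_of_mem_orthogonal (LinearMap.mem_range_self _ x) hu).symm
  have hmem : u ∈ T.adjoint.domain := mem_adjoint_domain_of_exists u ⟨0, hzero⟩
  exact ⟨hmem, adjoint_apply_eq hT ⟨u, hmem⟩ hzero⟩

theorem inner_adjoint_apply_eq_zero_of_mem_pKer (hT : Dense (T.domain : Set H))
    (y : T.adjoint.domain) {k : H} (hk : k ∈ T.pKer) : inner ℂ (T.adjoint y) k = 0 := by
  obtain ⟨hkT, hTk⟩ := hk
  rw [show k = ((⟨k, hkT⟩ : T.domain) : H) from rfl, adjoint_isFormalAdjoint hT y ⟨k, hkT⟩, hTk,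
    inner_zero_right]

theorem pRan_adjoint_subset_pRan (hT : Dense (T.domain : Set H)) (hran : _root_.IsClosed T.pRan)
    (hker : T.adjoint.pKer ⊆ T.pKer) : T.adjoint.pRan ⊆ T.pRan := by
  have : CompleteSpace (LinearMap.range T.toFun) := (T.coe_range_toFun ▸ hran).completeSpace_coe
  rintro _ ⟨y, rfl⟩
  rw [← coe_range_toFun, SetLike.mem_coe, ← (LinearMap.range T.toFun).orthogonal_orthogonal]
  intro u hu
  rw [← inner_conj_symm, inner_adjoint_apply_eq_zero_of_mem_pKer hT y
    (hker (orthogonal_range_subset_pKer_adjoint hT hu)), _root_.map_zero]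

end Hilbert

end LinearPMap

/-- a densely defined symmetric operator with closed range and
`ker T = ker T*` is self-adjoint. -/
theorem statement_13 {H : Type*} [NormedAddCommGroup H] [InnerProductSpace ℂ H] [CompleteSpace H]
    (T : H →ₗ.[ℂ] H) (hdense : Dense (T.domain : Set H)) (hsymm : T.IsSymm)
    (hran : IsClosed T.pRan) (hker : T.pKer = T.adjoint.pKer) :
    T.adjoint = T := by
  have hle : T ≤ T.adjoint := IsFormalAdjoint.le_adjoint hdense hsymm
  have hker' : T.adjoint.pKer ⊆ T.pKer := hker.superset
  exact (eq_of_le_of_pKer_subset_of_pRan_subset hle hker'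
    (pRan_adjoint_subset_pRan hdense hran hker')).symm
end

section
/- Let T be a symmetric operator (not necessarily densely defined) with T² ⊆ T. Then T is an everywhere-defined orthogonal projection if and only if Tⁿ is self-adjoint for some n ≥ 2. -/
open LinearPMap

set_option linter.unusedSectionVars false

/-!
If `Tⁿ` is self-adjoint, then `Tⁿ ⊆ T` and the maximality of self-adjoint operators among
symmetric ones give `T = Tⁿ`. Hence `T` is self-adjoint and `D(T) = D(Tⁿ) ⊆ D(T²)`, so `T² ⊆ T`
upgrades to `T² = T`. A symmetric idempotent is a contraction, since `‖Tx‖² = ⟪x, T²x⟫ = ⟪x, Tx⟫`,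
and a bounded operator has an everywhere defined adjoint, so `D(T) = D(T*) = H`.
-/

namespace LinearPMap

section Composition

variable {H : Type*} [NormedAddCommGroup H] [NormedSpace ℂ H] {g f T : H →ₗ.[ℂ] H}

theorem mem_pComp_domain {x : H} :
    x ∈ (g.pComp f).domain ↔ ∃ hx : x ∈ f.domain, f ⟨x, hx⟩ ∈ g.domain := by
  refine Submodule.mem_map.trans ⟨?_, ?_⟩
  · rintro ⟨y, hy, rfl⟩
    exact ⟨y.2, hy⟩
  · rintro ⟨hx, hfx⟩
    exact ⟨⟨x, hx⟩, hfx, rfl⟩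

theorem pComp_apply {x : H} (hX : x ∈ (g.pComp f).domain) (hx : x ∈ f.domain)
    (hfx : f ⟨x, hx⟩ ∈ g.domain) : g.pComp f ⟨x, hX⟩ = g ⟨f ⟨x, hx⟩, hfx⟩ := by
  have hpre : ((Submodule.equivMapOfInjective f.domain.subtype (Submodule.injective_subtype _)
      (g.domain.comap f.toFun)).symm ⟨x, hX⟩ : f.domain) = ⟨x, hx⟩ :=
    Subtype.ext (Submodule.map_equivMapOfInjective_symm_apply _ _ _ ⟨x, hX⟩)
  change g.toFun ⟨f.toFun _, _⟩ = g.toFun ⟨f.toFun ⟨x, hx⟩, hfx⟩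
  congr 3

theorem pComp_mono {g' f' : H →ₗ.[ℂ] H} (hg : g ≤ g') (hf : f ≤ f') :
    g.pComp f ≤ g'.pComp f' := by
  have hval : ∀ {x : H} (hx : x ∈ f.domain), f ⟨x, hx⟩ = f' ⟨x, hf.1 hx⟩ := fun _ => hf.2 rfl
  have hdom : (g.pComp f).domain ≤ (g'.pComp f').domain := fun x hX => by
    obtain ⟨hx, hfx⟩ := mem_pComp_domain.mp hX
    exact mem_pComp_domain.mpr ⟨hf.1 hx, hval hx ▸ hg.1 hfx⟩
  refine ⟨hdom, ?_⟩
  rintro ⟨x, hX⟩ ⟨_, hY⟩ rfl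
  obtain ⟨hx, hfx⟩ := mem_pComp_domain.mp hX
  rw [pComp_apply hX hx hfx, pComp_apply hY (hf.1 hx) (hval hx ▸ hg.1 hfx)]
  exact hg.2 (hval hx)

theorem pPow_one (T : H →ₗ.[ℂ] H) : T.pPow 1 = T := by
  have hdom : (T.pPow 1).domain = T.domain := by
    ext x
    exact mem_pComp_domain.trans ⟨fun ⟨_, hx⟩ => hx, fun hx => ⟨Submodule.mem_top, hx⟩⟩
  refine LinearPMap.ext hdom fun x hX hx => ?_
  exact pComp_apply (g := T) (f := T.pPow 0) hX Submodule.mem_top hx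

theorem pPow_two (T : H →ₗ.[ℂ] H) : T.pPow 2 = T.pComp T :=
  congrArg T.pComp T.pPow_one

theorem pPow_le_self (hsub : T.pComp T ≤ T) : ∀ {n : ℕ}, 1 ≤ n → T.pPow n ≤ T
  | 1, _ => T.pPow_one.le
  | n + 2, _ => (pComp_mono le_rfl (pPow_le_self hsub (Nat.le_add_left 1 n))).trans hsub

theorem pComp_self_eq_of_domain_le (hsub : T.pComp T ≤ T)
    (hdom : T.domain ≤ (T.pComp T).domain) : T.pComp T = T :=
  eq_of_le_of_domain_eq hsub (le_antisymm hsub.1 hdom)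

theorem exists_apply_apply_eq_of_pComp_self_eq (hT : T.pComp T = T) (x : T.domain) :
    ∃ hx : T x ∈ T.domain, T ⟨T x, hx⟩ = T x := by
  have hX : (x : H) ∈ (T.pComp T).domain := hT.symm ▸ x.2
  obtain ⟨-, hx⟩ : ∃ _ : (x : H) ∈ T.domain, T x ∈ T.domain := mem_pComp_domain.mp hX
  refine ⟨hx, ?_⟩
  rw [← pComp_apply hX x.2 hx]
  exact hT.le.2 rfl

end Composition

end LinearPMap

namespace ContinuousLinearMap

variable {H : Type*} [NormedAddCommGroup H] [NormedSpace ℂ H]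

theorem toPMapTop_injective : Function.Injective (toPMapTop : (H →L[ℂ] H) → H →ₗ.[ℂ] H) :=
  fun _ _ h => ext fun _ =>
    (LinearPMap.ext_iff.mp h).2 (hf := Submodule.mem_top) (hg := Submodule.mem_top)

theorem toPMapTop_pComp (A B : H →L[ℂ] H) :
    A.toPMapTop.pComp B.toPMapTop = (A * B).toPMapTop := by
  have hdom : (A.toPMapTop.pComp B.toPMapTop).domain = ⊤ :=
    eq_top_iff.mpr fun _ _ => LinearPMap.mem_pComp_domain.mpr ⟨trivial, trivial⟩
  refine LinearPMap.ext hdom fun x hX _ => ?_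
  exact LinearPMap.pComp_apply hX Submodule.mem_top Submodule.mem_top

theorem toPMapTop_pComp_self_eq_iff {P : H →L[ℂ] H} :
    P.toPMapTop.pComp P.toPMapTop = P.toPMapTop ↔ IsIdempotentElem P := by
  rw [toPMapTop_pComp, toPMapTop_injective.eq_iff]
  rfl

end ContinuousLinearMap

namespace LinearPMap

theorem exists_eq_toPMapTop {H : Type*} [NormedAddCommGroup H] [NormedSpace ℂ H]
    {T : H →ₗ.[ℂ] H} (hdom : T.domain = ⊤) (hT : Continuous T.toFun) :
    ∃ P : H →L[ℂ] H, T = P.toPMapTop :=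
  ⟨⟨T.toFun ∘ₗ (LinearEquiv.ofTop _ hdom).symm.toLinearMap,
      hT.comp (continuous_induced_rng.mpr continuous_id)⟩,
    LinearPMap.ext hdom fun _ _ _ => rfl⟩

section Adjoint

variable {𝕜 E F : Type*} [RCLike 𝕜] [NormedAddCommGroup E] [InnerProductSpace 𝕜 E]
  [NormedAddCommGroup F] [InnerProductSpace 𝕜 F] [CompleteSpace E]

theorem adjoint_le_adjoint {S T : E →ₗ.[𝕜] F} (hST : S ≤ T) (hS : Dense (S.domain : Set E)) :
    T† ≤ S† := by
  have hT : Dense (T.domain : Set E) := hS.mono hST.1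
  refine IsFormalAdjoint.le_adjoint hS (IsFormalAdjoint.symm fun y x => ?_)
  obtain ⟨x', hx', hx⟩ := exists_of_le hST x
  rw [hx, hx']
  exact adjoint_isFormalAdjoint hT y x'

theorem adjoint_domain_eq_top_of_continuous {T : E →ₗ.[𝕜] F} (hT : Continuous T.toFun) :
    T†.domain = ⊤ :=
  Submodule.eq_top_iff'.mpr fun y =>
    (mem_adjoint_domain_iff T y).mpr ((innerSL 𝕜 y).cont.comp hT)

theorem _root_.IsSelfAdjoint.eq_of_le_of_isFormalAdjoint {S T : E →ₗ.[𝕜] E}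
    (hS : IsSelfAdjoint S) (hT : T.IsFormalAdjoint T) (hST : S ≤ T) : S = T := by
  have hTS : T ≤ S :=
    calc T ≤ T† := hT.le_adjoint (hS.dense_domain.mono hST.1)
      _ ≤ S† := adjoint_le_adjoint hST hS.dense_domain
      _ = S := hS
  exact le_antisymm hST hTS

end Adjoint

variable {H : Type*} [NormedAddCommGroup H] [InnerProductSpace ℂ H] [CompleteSpace H]

theorem IsSymm.norm_apply_le {T : H →ₗ.[ℂ] H} (hT : T.IsSymm) {x : T.domain}
    (hx : T x ∈ T.domain) (hfix : T ⟨T x, hx⟩ = T x) : ‖T x‖ ≤ ‖(x : H)‖ := by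
  have hsq : ‖T x‖ ^ 2 ≤ ‖(x : H)‖ * ‖T x‖ :=
    calc ‖T x‖ ^ 2 = ‖(inner ℂ (T x) (T x) : ℂ)‖ := by rw [inner_self_eq_norm_sq_to_K]; simp
      _ = ‖(inner ℂ (x : H) (T x) : ℂ)‖ := by rw [hT x ⟨T x, hx⟩, hfix]
      _ ≤ ‖(x : H)‖ * ‖T x‖ := norm_inner_le_norm _ _
  nlinarith [norm_nonneg (T x), norm_nonneg (x : H)]

theorem _root_.ContinuousLinearMap.isSelfAdjoint_of_isSymm_toPMapTop {P : H →L[ℂ] H}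
    (hP : P.toPMapTop.IsSymm) : IsSelfAdjoint P :=
  LinearMap.IsSymmetric.isSelfAdjoint fun x y => hP ⟨x, trivial⟩ ⟨y, trivial⟩

end LinearPMap

/-- a symmetric `T` with `T² ⊆ T` is an everywhere-defined orthogonal
projection iff `Tⁿ` is self-adjoint for some `n ≥ 2`. -/
theorem statement_14 {H : Type*} [NormedAddCommGroup H] [InnerProductSpace ℂ H] [CompleteSpace H]
    (T : H →ₗ.[ℂ] H) (hsymm : T.IsSymm) (hsub : T.pComp T ≤ T) :
    (∃ P : H →L[ℂ] H, IsSelfAdjoint P ∧ IsIdempotentElem P ∧ T = P.toPMapTop) ↔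
      ∃ n : ℕ, 2 ≤ n ∧ (T.pPow n).adjoint = T.pPow n := by
  constructor
  · rintro ⟨P, hP, hidem, rfl⟩
    refine ⟨2, le_rfl, ?_⟩
    rw [pPow_two, ContinuousLinearMap.toPMapTop_pComp_self_eq_iff.mpr hidem,
      ContinuousLinearMap.toPMapTop,
      ContinuousLinearMap.toPMap_adjoint_eq_adjoint_toPMap_of_dense P (by simp), hP.adjoint_eq]
  · rintro ⟨n, hn, hsa⟩
    have hTn : T.pPow n = T :=
      IsSelfAdjoint.eq_of_le_of_isFormalAdjoint hsa hsymm (pPow_le_self hsub (by omega))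
    have hTsa : T† = T := hTn ▸ hsa
    have hidem : T.pComp T = T := pComp_self_eq_of_domain_le hsub <| by
      rw [← pPow_two]
      exact (congrArg domain hTn).ge.trans (T.pPow_domain_le hn)
    have hcont : Continuous T.toFun := AddMonoidHomClass.continuous_of_bound T.toFun 1 fun x => by
      obtain ⟨hx, hfix⟩ := exists_apply_apply_eq_of_pComp_self_eq hidem x
      simpa using hsymm.norm_apply_le hx hfix
    obtain ⟨P, rfl⟩ := exists_eq_toPMapTop (hTsa ▸ adjoint_domain_eq_top_of_continuous hcont) hcont
    exact ⟨P, ContinuousLinearMap.isSelfAdjoint_of_isSymm_toPMapTop hsymm,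
      ContinuousLinearMap.toPMapTop_pComp_self_eq_iff.mp hidem, rfl⟩
end
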